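/- The system of equations over ℚ given by p41 = p10^3·p12, p43 = p10^2·p12^2, p45 = p10·p12^3, p119 = p41·p43·p10^2·p12^3, p119 = p10^12, and p119 = p12^10 has exactly three solutions (p10, p12, p41, p43, p45, p119) ∈ ℚ^6, namely (0,0,0,0,0,0), (1,1,1,1,1,1), and (1,−1,−1,1,−1,1). -/
import Mathlib

private lemma pow5_eq_one {x : ℚ} (h : x ^ 5 = 1) : x = 1 := by
  have h' : x ^ 5 = 1 ^ 5 := by simpa using h
  exact (Odd.strictMono_pow (R := ℚ) (by decide)).injective h'

private lemma key {a b : ℚ} (h1 : a ^ 12 = a ^ 7 * b ^ 6) (h2 : b ^ 10 = a ^ 7 * b ^ 6) :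
    (a = 0 ∧ b = 0) ∨ (a = 1 ∧ b = 1) ∨ (a = 1 ∧ b = -1) := by
  rcases eq_or_ne a 0 with ha | ha
  · left
    refine ⟨ha, ?_⟩
    have hb : b ^ 10 = 0 := by rw [h2, ha]; ring
    exact pow_eq_zero_iff (by norm_num) |>.mp hb
  · right
    have h5 : a ^ 5 = b ^ 6 := by
      have h' : a ^ 7 * a ^ 5 = a ^ 7 * b ^ 6 := by rw [← h1]; ring
      exact mul_left_cancel₀ (pow_ne_zero 7 ha) h'
    have hb : b ≠ 0 := by
      intro hb
      apply ha
      have h0 : a ^ 5 = 0 := by rw [h5, hb]; ring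
      exact pow_eq_zero_iff (by norm_num) |>.mp h0
    have h4 : b ^ 4 = a ^ 7 := by
      have h' : b ^ 4 * b ^ 6 = a ^ 7 * b ^ 6 := by rw [← h2]; ring
      exact mul_right_cancel₀ (pow_ne_zero 6 hb) h'
    have h35 : b ^ 42 = b ^ 20 := by
      have e1 : a ^ 35 = b ^ 42 := by
        calc a ^ 35 = (a ^ 5) ^ 7 := by ring
        _ = (b ^ 6) ^ 7 := by rw [h5]
        _ = b ^ 42 := by ring
      have e2 : a ^ 35 = b ^ 20 := by
        calc a ^ 35 = (a ^ 7) ^ 5 := by ring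
        _ = (b ^ 4) ^ 5 := by rw [← h4]
        _ = b ^ 20 := by ring
      rw [← e1, e2]
    have h22 : (b ^ 2) ^ 11 = 1 ^ 11 := by
      have h' : b ^ 20 * b ^ 22 = b ^ 20 * 1 := by
        have e : b ^ 20 * b ^ 22 = b ^ 42 := by ring
        rw [e, h35, mul_one]
      have hc := mul_left_cancel₀ (pow_ne_zero 20 hb) h'
      calc (b ^ 2) ^ 11 = b ^ 22 := by ring
      _ = 1 ^ 11 := by rw [hc]; norm_num
    have hb2 : b ^ 2 = 1 :=
      (Odd.strictMono_pow (R := ℚ) (by decide)).injective h22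
    have ha1 : a = 1 := by
      apply pow5_eq_one
      calc a ^ 5 = b ^ 6 := h5
      _ = (b ^ 2) ^ 3 := by ring
      _ = 1 := by rw [hb2]; norm_num
    rcases sq_eq_one_iff.mp hb2 with h | h
    · exact Or.inl ⟨ha1, h⟩
    · exact Or.inr ⟨ha1, h⟩

private lemma vec0 (a b c d e f : ℚ) : ![a,b,c,d,e,f] 0 = a := rfl
private lemma vec1 (a b c d e f : ℚ) : ![a,b,c,d,e,f] 1 = b := rfl
private lemma vec2 (a b c d e f : ℚ) : ![a,b,c,d,e,f] 2 = c := rfl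
private lemma vec3 (a b c d e f : ℚ) : ![a,b,c,d,e,f] 3 = d := rfl
private lemma vec4 (a b c d e f : ℚ) : ![a,b,c,d,e,f] 4 = e := rfl
private lemma vec5 (a b c d e f : ℚ) : ![a,b,c,d,e,f] 5 = f := rfl

/-- Example 3.1: coordinates `p 0 = p10`, `p 1 = p12`, `p 2 = p41`, `p 3 = p43`,
`p 4 = p45`, `p 5 = p119`. The coherence system has exactly the three solutions
`(0,0,0,0,0,0)`, `(1,1,1,1,1,1)`, `(1,-1,-1,1,-1,1)`. -/
theorem stmt_0 :
    {p : Fin 6 → ℚ | p 2 = p 0 ^ 3 * p 1 ∧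
       p 3 = p 0 ^ 2 * p 1 ^ 2 ∧
       p 4 = p 0 * p 1 ^ 3 ∧
       p 5 = p 2 * p 3 * p 0 ^ 2 * p 1 ^ 3 ∧
       p 5 = p 0 ^ 12 ∧
       p 5 = p 1 ^ 10} =
      {![0, 0, 0, 0, 0, 0], ![1, 1, 1, 1, 1, 1], ![1, -1, -1, 1, -1, 1]} ∧
    ({![0, 0, 0, 0, 0, 0], ![1, 1, 1, 1, 1, 1], ![1, -1, -1, 1, -1, 1]} :
      Set (Fin 6 → ℚ)).ncard = 3 := by
  constructor
  · ext p
    simp only [Set.mem_setOf_eq, Set.mem_insert_iff, Set.mem_singleton_iff]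
    constructor
    · rintro ⟨h2, h3, h4, h5, h0, h1⟩
      have e1 : p 0 ^ 12 = p 0 ^ 7 * p 1 ^ 6 := by
        rw [← h0, h5, h2, h3]; ring
      have e2 : p 1 ^ 10 = p 0 ^ 7 * p 1 ^ 6 := by
        rw [← h1, h5, h2, h3]; ring
      rcases key e1 e2 with ⟨ha, hb⟩ | ⟨ha, hb⟩ | ⟨ha, hb⟩
      · left
        have v2 : p 2 = 0 := by rw [h2, ha, hb]; ring
        have v3 : p 3 = 0 := by rw [h3, ha, hb]; ring
        have v4 : p 4 = 0 := by rw [h4, ha, hb]; ring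
        have v5 : p 5 = 0 := by rw [h0, ha]; ring
        funext i; fin_cases i <;> simp [ha, hb, v2, v3, v4, v5, vec0, vec1, vec2, vec3, vec4, vec5]
      · right; left
        have v2 : p 2 = 1 := by rw [h2, ha, hb]; ring
        have v3 : p 3 = 1 := by rw [h3, ha, hb]; ring
        have v4 : p 4 = 1 := by rw [h4, ha, hb]; ring
        have v5 : p 5 = 1 := by rw [h0, ha]; ring
        funext i; fin_cases i <;> simp [ha, hb, v2, v3, v4, v5, vec0, vec1, vec2, vec3, vec4, vec5]
      · right; right
        have v2 : p 2 = -1 := by rw [h2, ha, hb]; ring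
        have v3 : p 3 = 1 := by rw [h3, ha, hb]; ring
        have v4 : p 4 = -1 := by rw [h4, ha, hb]; ring
        have v5 : p 5 = 1 := by rw [h0, ha]; ring
        funext i; fin_cases i <;> simp [ha, hb, v2, v3, v4, v5, vec0, vec1, vec2, vec3, vec4, vec5]
    · rintro (rfl | rfl | rfl) <;>
        norm_num [vec0, vec1, vec2, vec3, vec4, vec5]
  · rw [Set.ncard_insert_of_notMem, Set.ncard_insert_of_notMem, Set.ncard_singleton]
    · simp only [Set.mem_singleton_iff]
      intro h
      have h1 := congrFun h 1
      norm_num [Matrix.cons_val_one] at h1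
    · simp only [Set.mem_insert_iff, Set.mem_singleton_iff]
      rintro (h | h) <;> have h0 := congrFun h 0 <;>
        norm_num [Matrix.cons_val_zero] at h0
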